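/- arXiv:1609.06810 — 2 statements merged into one kernel-verified Lean document; each statement's English description precedes it below -/
import Mathlib

section
/- For any positive integer n, the central binomial coefficient C(2n−1, n−1) is odd if and only if n is a power of two. -/
/-!
Since `2 * C(2n-1, n-1) = C(2n, n)`, the coefficient is odd exactly when `C(2n, n)` is divisible
by `2` only once. By Kummer's theorem the `2`-adic valuation of `C(2n, n)` is the number of carries
when adding `n + n` in binary, which is the binary digit sum of `n`; and a positive integer has
digit sum `1` exactly when it is a power of the base.
-/

namespace Nat

theorem digits_sum_eq_zero_iff {b n : ℕ} : (b.digits n).sum = 0 ↔ n = 0 := by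
  refine ⟨fun h => ?_, fun h => by simp [h]⟩
  by_contra hn
  exact getLast_digit_ne_zero b hn
    (List.sum_eq_zero_iff.mp h _ (List.getLast_mem _))

theorem digits_sum_eq_one_iff {b n : ℕ} (hb : 1 < b) :
    (b.digits n).sum = 1 ↔ ∃ j, n = b ^ j := by
  refine ⟨fun h => ?_, ?_⟩
  · induction n using Nat.strong_induction_on with
    | _ n ih =>
      have hn : 0 < n := pos_of_ne_zero (by rintro rfl; simp at h)
      rw [digits_def' hb hn, List.sum_cons] at h
      have hdiv : n = b * (n / b) + n % b := (div_add_mod n b).symm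
      rcases add_eq_one_iff.mp h with ⟨hmod, hsum⟩ | ⟨hmod, hsum⟩
      · obtain ⟨j, hj⟩ := ih (n / b) (div_lt_self hn hb) hsum
        exact ⟨j + 1, by rw [hdiv, hmod, hj, pow_succ']; rfl⟩
      · rw [digits_sum_eq_zero_iff] at hsum
        exact ⟨0, by rw [hdiv, hmod, hsum]; rfl⟩
  · rintro ⟨j, rfl⟩
    simpa [digits_of_lt b 1 one_ne_zero hb] using
      congrArg List.sum (digits_base_pow_mul (k := j) hb one_pos)

theorem two_mul_choose_sub_one_eq_centralBinom {n : ℕ} (hn : 0 < n) :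
    2 * (2 * n - 1).choose (n - 1) = n.centralBinom := by
  obtain ⟨m, rfl⟩ : ∃ m, n = m + 1 := ⟨n - 1, by omega⟩
  have hsucc : 2 * (m + 1) = 2 * m + 1 + 1 := by ring
  rw [centralBinom_eq_two_mul_choose, hsucc, choose_succ_succ', choose_symm_half]
  simp [two_mul]

theorem padicValNat_two_centralBinom (n : ℕ) :
    padicValNat 2 n.centralBinom = (digits 2 n).sum := by
  rcases eq_zero_or_pos n with rfl | hn
  · simp
  have kummer :=
    sub_one_mul_padicValNat_choose_eq_sub_sum_digits' (p := 2) (k := n) (n := n)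
  rw [← two_mul, digits_base_mul one_lt_two hn, List.sum_cons] at kummer
  simpa [centralBinom_eq_two_mul_choose] using kummer

end Nat

theorem odd_iff_padicValNat_two_eq_zero {c : ℕ} (hc : c ≠ 0) :
    Odd c ↔ padicValNat 2 c = 0 := by
  simp [padicValNat.eq_zero_iff, hc, Nat.odd_iff, Nat.two_dvd_ne_zero]

theorem central_binom_odd_iff (n : ℕ) (hn : 1 ≤ n) :
    Odd ((2 * n - 1).choose (n - 1)) ↔ ∃ j : ℕ, n = 2 ^ j := by
  have hc : (2 * n - 1).choose (n - 1) ≠ 0 := (Nat.choose_pos (by omega)).ne'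
  calc Odd ((2 * n - 1).choose (n - 1))
      ↔ padicValNat 2 ((2 * n - 1).choose (n - 1)) = 0 := odd_iff_padicValNat_two_eq_zero hc
    _ ↔ padicValNat 2 n.centralBinom = 1 := by
      rw [← Nat.two_mul_choose_sub_one_eq_centralBinom hn, padicValNat.mul two_ne_zero hc,
        padicValNat.self one_lt_two]
      omega
    _ ↔ (Nat.digits 2 n).sum = 1 := by rw [Nat.padicValNat_two_centralBinom]
    _ ↔ ∃ j : ℕ, n = 2 ^ j := Nat.digits_sum_eq_one_iff one_lt_two
end

section
/- For any positive integer n, the second binomial transform of the Domb numbers satisfies 3 ∣ ∑_{m=0}^n C(n,m) ∑_{k=0}^m C(m,k) D_k, where D_k is the k-th Domb number. -/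
/-!
For a prime `p` and `r < p`, Lucas' theorem gives `C(pq + r, pa + s) ≡ C(r, s) C(q, a)` and
`C(2(pa + s), pa + s) ≡ C(2s, s) C(2a, a)` modulo `p`, so the Domb summands factor and
`D_{pq+r} ≡ D_q D_r (mod p)`. Since `D_0, D_1, D_2 = 1, 4, 28 ≡ 1 (mod 3)`, every Domb number is
`≡ 1 (mod 3)`, and the second binomial transform is `≡ ∑ C(n, m) 2^m = 3^n ≡ 0 (mod 3)`.
-/

open Finset

theorem Finset.sum_range_mul_eq_sum_sum {M : Type*} [AddCommMonoid M] (f : ℕ → M) (p m : ℕ) :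
    ∑ j ∈ range (p * m), f j = ∑ a ∈ range m, ∑ s ∈ range p, f (p * a + s) := by
  induction m with
  | zero => simp
  | succ m ih => rw [mul_add_one, sum_range_add, ih, sum_range_succ]

namespace Nat

variable {p : ℕ} [hp : Fact p.Prime]

theorem cast_choose_mul_add_mul_add (q r a s : ℕ) (hr : r < p) (hs : s < p) :
    ((p * q + r).choose (p * a + s) : ZMod p) = r.choose s * q.choose a := by
  have := Choose.choose_modEq_choose_mod_mul_choose_div_nat
    (n := p * q + r) (k := p * a + s) (p := p)
  rw [← ZMod.natCast_eq_natCast_iff] at this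
  have hp0 : 0 < p := hp.out.pos
  simp only [mul_add_mod, mod_eq_of_lt hr, mod_eq_of_lt hs, mul_add_div hp0,
    div_eq_of_lt hr, div_eq_of_lt hs, add_zero] at this
  exact_mod_cast this

theorem cast_centralBinom_mul_add (a s : ℕ) (hs : s < p) :
    ((p * a + s).centralBinom : ZMod p) = s.centralBinom * a.centralBinom := by
  simp only [centralBinom_eq_two_mul_choose]
  rcases lt_or_ge (2 * s) p with h | h
  · rw [show 2 * (p * a + s) = p * (2 * a) + 2 * s by ring,
      cast_choose_mul_add_mul_add _ _ _ _ h hs]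
  · -- the carry in `s + s` kills both sides
    have hpdvd : p ∣ (2 * s).choose s := by
      rw [two_mul]; exact hp.out.dvd_choose_add hs hs (by omega)
    rw [show 2 * (p * a + s) = p * (2 * a + 1) + (2 * s - p) by
        have : p * (2 * a + 1) = 2 * (p * a) + p := by ring
        omega,
      cast_choose_mul_add_mul_add _ _ _ _ (by omega) hs, choose_eq_zero_of_lt (by omega),
      (ZMod.natCast_eq_zero_iff _ _).2 hpdvd]
    simp

end Nat

def dombTerm (n j : ℕ) : ℕ := n.choose j ^ 2 * j.centralBinom * (n - j).centralBinom

def domb (n : ℕ) : ℕ := ∑ j ∈ range (n + 1), dombTerm n j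

theorem dombTerm_eq_zero_of_lt {n j : ℕ} (h : n < j) : dombTerm n j = 0 := by
  simp [dombTerm, Nat.choose_eq_zero_of_lt h]

theorem domb_eq_sum_range_of_lt {n N : ℕ} (h : n < N) :
    domb n = ∑ j ∈ range N, dombTerm n j :=
  sum_subset (range_subset_range.2 h) fun j _ hj ↦
    dombTerm_eq_zero_of_lt (by simpa using hj)

section Lucas

variable {p : ℕ} [Fact p.Prime]

theorem cast_dombTerm_mul_add_mul_add (q r a s : ℕ) (hr : r < p) (hs : s < p) :
    (dombTerm (p * q + r) (p * a + s) : ZMod p) = dombTerm q a * dombTerm r s := by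
  by_cases h : s ≤ r ∧ a ≤ q
  · have hsub : p * q + r - (p * a + s) = p * (q - a) + (r - s) := by
      have := Nat.mul_le_mul_left p h.2
      rw [Nat.mul_sub]; omega
    simp only [dombTerm, Nat.cast_mul, Nat.cast_pow, hsub,
      Nat.cast_choose_mul_add_mul_add _ _ _ _ hr hs,
      Nat.cast_centralBinom_mul_add _ _ hs,
      Nat.cast_centralBinom_mul_add _ _ (by omega : r - s < p)]
    ring
  · have hzero : (dombTerm (p * q + r) (p * a + s) : ZMod p) = 0 := by
      simp only [dombTerm, Nat.cast_mul, Nat.cast_pow,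
        Nat.cast_choose_mul_add_mul_add _ _ _ _ hr hs]
      rcases not_and_or.1 h with h | h <;> simp [Nat.choose_eq_zero_of_lt (not_le.1 h)]
    rcases not_and_or.1 h with h | h <;> simp [hzero, dombTerm_eq_zero_of_lt (not_le.1 h)]

theorem cast_domb_mul_add (q r : ℕ) (hr : r < p) :
    (domb (p * q + r) : ZMod p) = domb q * domb r := by
  rw [domb_eq_sum_range_of_lt (by nlinarith : p * q + r < p * (q + 1)), sum_range_mul_eq_sum_sum,
    domb_eq_sum_range_of_lt hr, domb, Nat.cast_sum, Nat.cast_sum, Nat.cast_sum, sum_mul_sum]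
  simp only [Nat.cast_sum]
  exact sum_congr rfl fun a _ ↦ sum_congr rfl fun s hs ↦
    cast_dombTerm_mul_add_mul_add q r a s hr (mem_range.1 hs)

end Lucas

theorem cast_domb_zmod_three (n : ℕ) : (domb n : ZMod 3) = 1 := by
  induction n using Nat.strong_induction_on with
  | _ n ih =>
    have : Fact (Nat.Prime 3) := ⟨Nat.prime_three⟩
    rcases lt_or_ge n 3 with hn | hn
    · interval_cases n <;> decide
    · rw [← Nat.div_add_mod n 3, cast_domb_mul_add _ _ (Nat.mod_lt _ (by norm_num)),
        ih _ (Nat.div_lt_self (by omega) (by norm_num)), ih _ (by omega), mul_one]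

theorem sum_choose_mul_sum_choose (n : ℕ) :
    ∑ m ∈ range (n + 1), n.choose m * ∑ k ∈ range (m + 1), m.choose k = 3 ^ n := by
  simp_rw [Nat.sum_range_choose]
  rw [show 3 = 2 + 1 from rfl, add_pow]
  exact sum_congr rfl fun m _ ↦ by rw [Nat.cast_id, one_pow, mul_one, mul_comm]

theorem domb_second_binomial_transform_div_three (n : ℕ) (hn : 1 ≤ n) :
    3 ∣ ∑ m ∈ Finset.range (n + 1), n.choose m *
        ∑ k ∈ Finset.range (m + 1), m.choose k *
          ∑ j ∈ Finset.range (k + 1),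
            (k.choose j) ^ 2 * (2 * j).choose j * (2 * (k - j)).choose (k - j) := by
  change 3 ∣ ∑ m ∈ range (n + 1), n.choose m * ∑ k ∈ range (m + 1), m.choose k * domb k
  rw [← ZMod.natCast_eq_zero_iff]
  push_cast [cast_domb_zmod_three, mul_one]
  have h3 : ((3 ^ n : ℕ) : ZMod 3) = 0 := by
    rw [Nat.cast_pow, ZMod.natCast_self, zero_pow (by omega)]
  rw [← sum_choose_mul_sum_choose n] at h3
  exact_mod_cast h3
end
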